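/- arXiv:1404.1239 — 4 statements merged into one kernel-verified Lean document; each statement's English description precedes it below -/
import Mathlib

section
/- For a fixed subject network A and fixed η, there exists a finite threshold λ* ≥ 0 such that for all λ > λ*, any joint MAP estimate Ĝ^(1:K) satisfies: for every edge (k,l) ∈ A, Ĝ^(k) = Ĝ^(l). In particular, when subjects are coupled strongly enough, connected subjects receive identical DAG estimates. -/
/-! A constant assignment pays no coupling penalty, and no assignment beats it in total score
by more than `λ* = ∑ k, (max s_k - min s_k)`. A disagreement on an edge of `A` costs at least
`λ > λ*`, so a maximizer cannot afford one. -/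

open Finset

lemma sum_apply_sub_sum_apply_le_sum_sup'_sub_inf' {ι α : Type*} [Fintype ι] [Fintype α]
    [Nonempty α] (s : ι → α → ℝ) (g g' : ι → α) :
    ∑ k, s k (g k) - ∑ k, s k (g' k) ≤
      ∑ k, (univ.sup' univ_nonempty (s k) - univ.inf' univ_nonempty (s k)) := by
  rw [← sum_sub_distrib]
  exact sum_le_sum fun k _ =>
    sub_le_sub (le_sup' (s k) (mem_univ _)) (inf'_le (s k) (mem_univ _))

section Dissimilarity

variable {G ι : Type*} {d : G → G → ℝ}

lemma dissimilarity_nonneg (hd0 : ∀ g, d g g = 0) (hd1 : ∀ g h : G, g ≠ h → 1 ≤ d g h)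
    (g h : G) : 0 ≤ d g h := by
  rcases eq_or_ne g h with rfl | hgh
  · exact (hd0 g).ge
  · exact zero_le_one.trans (hd1 g h hgh)

lemma one_le_sum_dissimilarity_of_ne (hd0 : ∀ g, d g g = 0)
    (hd1 : ∀ g h : G, g ≠ h → 1 ≤ d g h) {A : Finset (ι × ι)} {g : ι → G} {p : ι × ι}
    (hp : p ∈ A) (hne : g p.1 ≠ g p.2) : 1 ≤ ∑ q ∈ A, d (g q.1) (g q.2) :=
  (hd1 _ _ hne).trans <| single_le_sum (f := fun q => d (g q.1) (g q.2))
    (fun _ _ => dissimilarity_nonneg hd0 hd1 _ _) hp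

end Dissimilarity

/-- for λ above the threshold λ* = Σ_k (max s_k − min s_k),
any joint MAP estimate has identical DAGs for all pairs coupled by A. -/
theorem strong_coupling_forces_equality {G : Type*} [Fintype G] [Nonempty G] {K : ℕ}
    (s : Fin K → G → ℝ) (d : G → G → ℝ)
    (hd0 : ∀ g, d g g = 0) (hd1 : ∀ g h : G, g ≠ h → 1 ≤ d g h)
    (A : Finset (Fin K × Fin K)) (lam : ℝ)
    (hlam : (∑ k, (Finset.univ.sup' Finset.univ_nonempty (s k) -
        Finset.univ.inf' Finset.univ_nonempty (s k))) < lam)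
    (ghat : Fin K → G)
    (hmax : ∀ g : Fin K → G,
      (∑ k, s k (g k) - lam * ∑ p ∈ A, d (g p.1) (g p.2)) ≤
        (∑ k, s k (ghat k) - lam * ∑ p ∈ A, d (ghat p.1) (ghat p.2))) :
    ∀ p ∈ A, ghat p.1 = ghat p.2 := by
  intro p hp
  by_contra hne
  obtain ⟨c⟩ := ‹Nonempty G›
  have hpenalty := one_le_sum_dissimilarity_of_ne hd0 hd1 hp hne
  have hconst := hmax fun _ => c
  simp only [hd0, sum_const_zero, mul_zero, sub_zero] at hconst
  have hgain := sum_apply_sub_sum_apply_le_sum_sup'_sub_inf' s ghat fun _ => c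
  have hlam_nonneg : 0 ≤ lam := by
    have := sum_apply_sub_sum_apply_le_sum_sup'_sub_inf' s (fun _ => c) fun _ => c
    rw [sub_self] at this
    linarith
  have hcost := mul_le_mul_of_nonneg_left hpenalty hlam_nonneg
  linarith
end

section
/- Non-monotonicity of edge inclusion in λ for the joint MAP over two subjects: there exist parent-set scores on a two-variable, two-subject system coupled by the network A = {(1,2)} such that the edge 1→2 is present in the MAP estimate Ĝ^(1) for all λ ∈ [0,1), absent for all λ ∈ (1,2), and present again for all λ > 2. Hence the indicator of edge inclusion in the MAP estimate is not a monotone function of the regularity parameter λ. -/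
/-- The three DAGs on two variables: empty, edge 1→2, edge 2→1. -/
inductive Dag2 : Type
  | empty : Dag2
  | e12 : Dag2
  | e21 : Dag2
  deriving DecidableEq

/-- Subject 1 scores: s¹(1,∅)=0, s¹(1,{2})=−3, s¹(2,∅)=0, s¹(2,{1})=1. -/
def score1 : Dag2 → ℝ
  | .empty => 0
  | .e12 => 1
  | .e21 => -3

/-- Subject 2 scores: s²(1,∅)=0, s²(1,{2})=4, s²(2,∅)=0, s²(2,{1})=1. -/
def score2 : Dag2 → ℝ
  | .empty => 0
  | .e12 => 1
  | .e21 => 4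

/-- Structural Hamming distance between the three DAGs. -/
def shd2 : Dag2 → Dag2 → ℝ
  | .empty, .empty => 0
  | .e12, .e12 => 0
  | .e21, .e21 => 0
  | .empty, _ => 1
  | _, .empty => 1
  | _, _ => 2

/-- Joint objective for the two-subject system coupled by A = {(1,2)}. -/
def F4 (lam : ℝ) (p : Dag2 × Dag2) : ℝ :=
  score1 p.1 + score2 p.2 - lam * shd2 p.1 p.2
/-! For `λ ≥ 0` the objective is a family of nine affine functions of `λ`, and only the three lines
`5 - 2λ` (at `(1→2, 2→1)`), `4 - λ` (at `(∅, 2→1)`) and `2` (at `(1→2, 1→2)`) ever reach the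
upper envelope; the remaining six pairs stay strictly below the constant `2`. The maximizer is
therefore decided by comparing those three lines, which cross at `λ = 1` and `λ = 2`. -/

def upperEnvelopePairs : Finset (Dag2 × Dag2) :=
  {(.e12, .e21), (.empty, .e21), (.e12, .e12)}

section

variable {lam : ℝ}

lemma F4_e12_e21 : F4 lam (.e12, .e21) = 5 - 2 * lam := by
  norm_num [F4, score1, score2, shd2]; ring

lemma F4_empty_e21 : F4 lam (.empty, .e21) = 4 - lam := by
  norm_num [F4, score1, score2, shd2]

lemma F4_e12_e12 : F4 lam (.e12, .e12) = 2 := by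
  norm_num [F4, score1, score2, shd2]

lemma F4_lt_two_of_not_mem_upperEnvelopePairs (hlam : 0 ≤ lam) {p : Dag2 × Dag2}
    (hp : p ∉ upperEnvelopePairs) : F4 lam p < 2 := by
  obtain ⟨_ | _ | _, _ | _ | _⟩ := p <;>
    first
    | exact absurd (by decide) hp
    | norm_num [F4, score1, score2, shd2] <;> linarith

lemma F4_lt_of_beats_upperEnvelopePairs (hlam : 0 ≤ lam) {w : Dag2 × Dag2}
    (hbeat : ∀ c ∈ upperEnvelopePairs, c ≠ w → F4 lam c < F4 lam w)
    {p : Dag2 × Dag2} (hp : p ≠ w) : F4 lam p < F4 lam w := by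
  have htwo : 2 ≤ F4 lam w := by
    rw [← F4_e12_e12 (lam := lam)]
    by_cases h : ((.e12, .e12) : Dag2 × Dag2) = w
    · exact h ▸ le_rfl
    · exact (hbeat _ (by decide) h).le
  by_cases hmem : p ∈ upperEnvelopePairs
  · exact hbeat p hmem hp
  · exact (F4_lt_two_of_not_mem_upperEnvelopePairs hlam hmem).trans_le htwo

end

/-- non-monotonicity of edge inclusion in λ. The edge 1→2 is present
in Ĝ¹ for λ ∈ [0,1), absent for λ ∈ (1,2), present again for λ > 2 (unique maximizers). -/
theorem nonmonotone_edge_in_lambda (lam : ℝ) :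
    (0 ≤ lam → lam < 1 → ∀ p : Dag2 × Dag2, p ≠ (Dag2.e12, Dag2.e21) →
      F4 lam p < F4 lam (Dag2.e12, Dag2.e21)) ∧
    (1 < lam → lam < 2 → ∀ p : Dag2 × Dag2, p ≠ (Dag2.empty, Dag2.e21) →
      F4 lam p < F4 lam (Dag2.empty, Dag2.e21)) ∧
    (2 < lam → ∀ p : Dag2 × Dag2, p ≠ (Dag2.e12, Dag2.e12) →
      F4 lam p < F4 lam (Dag2.e12, Dag2.e12)) := by
  refine ⟨fun h0 h1 _ => F4_lt_of_beats_upperEnvelopePairs h0 ?_,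
    fun h1 h2 _ => F4_lt_of_beats_upperEnvelopePairs (by linarith) ?_,
    fun h2 _ => F4_lt_of_beats_upperEnvelopePairs (by linarith) ?_⟩ <;>
  · simp only [upperEnvelopePairs, Finset.mem_insert, Finset.mem_singleton]
    rintro c (rfl | rfl | rfl) hc <;>
      first
      | exact absurd rfl hc
      | simp only [F4_e12_e21, F4_empty_e21, F4_e12_e12]; linarith
end

section
/- For λ exceeding the threshold λ* = Σ_k (max_g s_k(g) − min_g s_k(g)) and a connected network A on K subjects, every joint MAP estimate assigns the same DAG to all K subjects, and that common DAG maximizes the pooled score Σ_k s_k(g) over g ∈ G. -/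
/-! A non-constant assignment pays a coupling penalty of at least `λ` (some edge of `A` joins two
different DAGs, and `d ≥ 1` there), while switching to any constant assignment costs at most
`λ* = Σ_k (max s_k − min s_k)` in score and removes the penalty entirely. So for `λ > λ*` every
maximizer has no disagreeing edge, hence is constant by connectivity; comparing it with the
other constant assignments shows that its common value maximizes the pooled score. -/

open Finset

theorem Relation.ReflTransGen.apply_eq {α β : Type*} {r : α → α → Prop} {f : α → β}
    (hf : ∀ a b, r a b → f a = f b) {a b : α} (h : Relation.ReflTransGen r a b) : f a = f b := by
  induction h with
  | refl => rfl
  | tail _ hbc ih => exact ih.trans (hf _ _ hbc)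

namespace StrongCoupling

variable {ι G : Type*}

section Penalty

variable {d : G → G → ℝ} (hd0 : ∀ g, d g g = 0) (hd1 : ∀ g h : G, g ≠ h → 1 ≤ d g h)

noncomputable def couplingPenalty (d : G → G → ℝ) (A : Finset (ι × ι)) (g : ι → G) : ℝ :=
  ∑ p ∈ A, d (g p.1) (g p.2)

include hd0 in
theorem couplingPenalty_const (A : Finset (ι × ι)) (c : G) :
    couplingPenalty d A (fun _ => c) = 0 := by
  simp [couplingPenalty, hd0]

include hd0 hd1 in
theorem one_le_couplingPenalty {A : Finset (ι × ι)} {g : ι → G} {p : ι × ι} (hp : p ∈ A)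
    (hne : g p.1 ≠ g p.2) : 1 ≤ couplingPenalty d A g := by
  have hd_nonneg : ∀ a b, 0 ≤ d a b := fun a b => by
    obtain rfl | hab := eq_or_ne a b
    · exact (hd0 a).ge
    · exact zero_le_one.trans (hd1 a b hab)
  exact (hd1 _ _ hne).trans <|
    single_le_sum (f := fun q => d (g q.1) (g q.2)) (fun _ _ => hd_nonneg _ _) hp

include hd0 hd1 in
theorem eq_of_mem_of_couplingPenalty_lt_one {A : Finset (ι × ι)} {g : ι → G}
    (hlt : couplingPenalty d A g < 1) {p : ι × ι} (hp : p ∈ A) : g p.1 = g p.2 := by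
  by_contra hne
  exact (one_le_couplingPenalty hd0 hd1 hp hne).not_gt hlt

end Penalty

section Spread

variable [Fintype ι] [Fintype G] [Nonempty G]

/-- The threshold `λ*` of the statement. -/
noncomputable def scoreSpread (s : ι → G → ℝ) : ℝ :=
  ∑ k, (univ.sup' univ_nonempty (s k) - univ.inf' univ_nonempty (s k))

theorem sum_sub_sum_le_scoreSpread (s : ι → G → ℝ) (g : ι → G) (c : G) :
    ∑ k, s k (g k) - ∑ k, s k c ≤ scoreSpread s := by
  rw [scoreSpread, ← sum_sub_distrib]
  gcongr with k
  · exact le_sup' (s k) (mem_univ _)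
  · exact inf'_le (s k) (mem_univ _)

theorem scoreSpread_nonneg (s : ι → G → ℝ) : 0 ≤ scoreSpread s := by
  obtain ⟨c⟩ := ‹Nonempty G›
  simpa using sum_sub_sum_le_scoreSpread s (fun _ => c) c

end Spread

variable [Fintype ι] {d : G → G → ℝ} (hd0 : ∀ g, d g g = 0)

noncomputable def jointObjective (s : ι → G → ℝ) (d : G → G → ℝ) (A : Finset (ι × ι)) (lam : ℝ)
    (g : ι → G) : ℝ :=
  ∑ k, s k (g k) - lam * couplingPenalty d A g

include hd0 in
theorem jointObjective_const (s : ι → G → ℝ) (A : Finset (ι × ι)) (lam : ℝ) (c : G) :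
    jointObjective s d A lam (fun _ => c) = ∑ k, s k c := by
  simp [jointObjective, couplingPenalty_const hd0]

include hd0 in
theorem couplingPenalty_lt_one_of_isMax [Fintype G] [Nonempty G] {s : ι → G → ℝ}
    {A : Finset (ι × ι)} {lam : ℝ} (hlam : scoreSpread s < lam) {ghat : ι → G}
    (hmax : ∀ g, jointObjective s d A lam g ≤ jointObjective s d A lam ghat) :
    couplingPenalty d A ghat < 1 := by
  obtain ⟨c⟩ := ‹Nonempty G›
  have hlam_pos : 0 < lam := (scoreSpread_nonneg s).trans_lt hlam
  have hcost : lam * couplingPenalty d A ghat ≤ ∑ k, s k (ghat k) - ∑ k, s k c := by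
    have := hmax fun _ => c
    rw [jointObjective_const hd0, jointObjective] at this
    linarith
  have : lam * couplingPenalty d A ghat < lam * 1 := by
    linarith [sum_sub_sum_le_scoreSpread s ghat c]
  exact lt_of_mul_lt_mul_left this hlam_pos.le

end StrongCoupling

open StrongCoupling in
theorem strong_coupling_connected_pooled_general {G : Type*} [Fintype G] [Nonempty G] {K : ℕ}
    (s : Fin K → G → ℝ) (d : G → G → ℝ)
    (hd0 : ∀ g, d g g = 0) (hd1 : ∀ g h : G, g ≠ h → 1 ≤ d g h)
    (A : Finset (Fin K × Fin K))
    (hconn : ∀ k l : Fin K,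
      Relation.ReflTransGen (fun a b => (a, b) ∈ A ∨ (b, a) ∈ A) k l)
    (lam : ℝ)
    (hlam : (∑ k, (Finset.univ.sup' Finset.univ_nonempty (s k) -
        Finset.univ.inf' Finset.univ_nonempty (s k))) < lam)
    (ghat : Fin K → G)
    (hmax : ∀ g : Fin K → G,
      (∑ k, s k (g k) - lam * ∑ p ∈ A, d (g p.1) (g p.2)) ≤
        (∑ k, s k (ghat k) - lam * ∑ p ∈ A, d (ghat p.1) (ghat p.2))) :
    (∀ k l : Fin K, ghat k = ghat l) ∧
    (∀ (h' : G) (k0 : Fin K), ∑ k, s k h' ≤ ∑ k, s k (ghat k0)) := by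
  have hP : couplingPenalty d A ghat < 1 := couplingPenalty_lt_one_of_isMax hd0 hlam hmax
  have hconst : ∀ k l, ghat k = ghat l := fun k l =>
    (hconn k l).apply_eq fun a b hab => by
      rcases hab with hab | hba
      · exact eq_of_mem_of_couplingPenalty_lt_one hd0 hd1 hP hab
      · exact (eq_of_mem_of_couplingPenalty_lt_one hd0 hd1 hP hba).symm
  refine ⟨hconst, fun h' k0 => ?_⟩
  have hghat : ghat = fun _ => ghat k0 := funext fun k => hconst k k0
  have : jointObjective s d A lam (fun _ => h') ≤ jointObjective s d A lam (fun _ => ghat k0) :=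
    hghat ▸ hmax fun _ => h'
  rwa [jointObjective_const hd0, jointObjective_const hd0] at this

/-- for λ above λ* = Σ_k (max s_k − min s_k) and a connected network A,
every joint MAP estimate is constant across subjects and the common DAG maximizes
the pooled score Σ_k s_k. -/
theorem strong_coupling_connected_pooled {G : Type*} [Fintype G] [Nonempty G] {K : ℕ}
    (hK : 0 < K) (s : Fin K → G → ℝ) (d : G → G → ℝ)
    (hd0 : ∀ g, d g g = 0) (hd1 : ∀ g h : G, g ≠ h → 1 ≤ d g h)
    (A : Finset (Fin K × Fin K))
    (hconn : ∀ k l : Fin K,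
      Relation.ReflTransGen (fun a b => (a, b) ∈ A ∨ (b, a) ∈ A) k l)
    (lam : ℝ)
    (hlam : (∑ k, (Finset.univ.sup' Finset.univ_nonempty (s k) -
        Finset.univ.inf' Finset.univ_nonempty (s k))) < lam)
    (ghat : Fin K → G)
    (hmax : ∀ g : Fin K → G,
      (∑ k, s k (g k) - lam * ∑ p ∈ A, d (g p.1) (g p.2)) ≤
        (∑ k, s k (ghat k) - lam * ∑ p ∈ A, d (ghat p.1) (ghat p.2))) :
    (∀ k l : Fin K, ghat k = ghat l) ∧
    (∀ (h' : G) (k0 : Fin K), ∑ k, s k h' ≤ ∑ k, s k (ghat k0)) :=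
  strong_coupling_connected_pooled_general s d hd0 hd1 A hconn lam hlam ghat hmax
end

section
/- The profiled objective over DAG tuples after optimizing out the network A is V(g) = Σ_k s_k(g k) + Σ_{k<l} max(0, η − λ·d(g k, g l)), and hence joint maximization of F(g,A) over (g,A) is equivalent to maximization of V over g alone: (ĝ, Â) maximizes F if and only if ĝ maximizes V and Â includes all pairs with η − λ d(ĝ k, ĝ l) > 0 and no pairs with η − λ d(ĝ k, ĝ l) < 0. -/
/-!
For a fixed tuple `g`, the gain `∑_{p ∈ A} (η - λ d(g p.1, g p.2))` of a network `A` of ordered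
pairs is largest when `A` takes exactly the pairs of positive weight, where it equals
`∑_{k<l} max 0 (η - λ d(g k, g l))`; so `V` is `F` with `A` maximized out. A pair `(ĝ, Â)`
then maximizes `F` iff `ĝ` maximizes this profile and `Â` attains the inner maximum, and `Â`
attains it iff it takes every pair of positive weight and no pair of negative weight.
-/

open Finset

theorem joint_max_iff_profile_max {α β γ : Type*} [PartialOrder γ] (valid : β → Prop)
    (f : α → β → γ) (h : α → γ) (hle : ∀ a b, valid b → f a b ≤ h a)
    (hattain : ∀ a, ∃ b, valid b ∧ f a b = h a) (a₀ : α) {b₀ : β} (hb₀ : valid b₀) :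
    (∀ a b, valid b → f a b ≤ f a₀ b₀) ↔ (∀ a, h a ≤ h a₀) ∧ f a₀ b₀ = h a₀ := by
  constructor
  · intro hmax
    refine ⟨fun a => ?_, le_antisymm (hle a₀ b₀ hb₀) ?_⟩
    · obtain ⟨b, hb, hfb⟩ := hattain a
      calc h a = f a b := hfb.symm
        _ ≤ f a₀ b₀ := hmax a b hb
        _ ≤ h a₀ := hle a₀ b₀ hb₀
    · obtain ⟨b, hb, hfb⟩ := hattain a₀
      exact hfb ▸ hmax a₀ b hb
  · rintro ⟨hprofile, hb₀max⟩ a b hb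
    calc f a b ≤ h a := hle a b hb
      _ ≤ h a₀ := hprofile a
      _ = f a₀ b₀ := hb₀max.symm

namespace Finset

variable {ι : Type*} {P A : Finset ι} (w : ι → ℝ)

theorem sum_le_sum_max_zero_of_subset (hA : A ⊆ P) :
    ∑ p ∈ A, w p ≤ ∑ p ∈ P, max 0 (w p) :=
  calc ∑ p ∈ A, w p ≤ ∑ p ∈ A, max 0 (w p) := sum_le_sum fun _ _ => le_max_right _ _
    _ ≤ ∑ p ∈ P, max 0 (w p) := sum_le_sum_of_subset_of_nonneg hA fun _ _ _ => le_max_left _ _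

theorem sum_filter_pos_eq_sum_max_zero :
    ∑ p ∈ P.filter (fun p => 0 < w p), w p = ∑ p ∈ P, max 0 (w p) := by
  rw [sum_filter]
  refine sum_congr rfl fun p _ => ?_
  split_ifs with hp
  · exact (max_eq_right hp.le).symm
  · exact (max_eq_left (not_lt.mp hp)).symm

theorem sum_eq_sum_max_zero_iff (hA : A ⊆ P) :
    ∑ p ∈ A, w p = ∑ p ∈ P, max 0 (w p) ↔
      ∀ p ∈ P, (0 < w p → p ∈ A) ∧ (w p < 0 → p ∉ A) := by
  classical
  have hsplit : ∑ p ∈ P, max 0 (w p) - ∑ p ∈ A, w p =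
      ∑ p ∈ P \ A, max 0 (w p) + ∑ p ∈ A, (max 0 (w p) - w p) := by
    rw [← sum_sdiff hA, sum_sub_distrib]; ring
  have hout : 0 ≤ ∑ p ∈ P \ A, max 0 (w p) := sum_nonneg fun _ _ => le_max_left _ _
  have hin : 0 ≤ ∑ p ∈ A, (max 0 (w p) - w p) :=
    sum_nonneg fun _ _ => sub_nonneg.mpr (le_max_right _ _)
  rw [eq_comm, ← sub_eq_zero, hsplit, add_eq_zero_iff_of_nonneg hout hin,
    sum_eq_zero_iff_of_nonneg (fun _ _ => le_max_left _ _),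
    sum_eq_zero_iff_of_nonneg (fun _ _ => sub_nonneg.mpr (le_max_right _ _))]
  simp only [mem_sdiff, and_imp, max_eq_left_iff, sub_eq_zero, max_eq_right_iff]
  constructor
  · rintro ⟨hnonpos_out, hnonneg_in⟩ p hp
    exact ⟨fun hpos => by_contra fun hpA => (hnonpos_out p hp hpA).not_gt hpos,
      fun hneg hpA => (hnonneg_in p hpA).not_gt hneg⟩
  · intro hsign
    exact ⟨fun p hp hpA => not_lt.mp fun hpos => hpA ((hsign p hp).1 hpos),
      fun p hpA => not_lt.mp fun hneg => (hsign p (hA hpA)).2 hneg hpA⟩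

end Finset

theorem profiled_objective_equivalence_general {G : Type*}
    {K : ℕ} (s : Fin K → G → ℝ) (d : G → G → ℝ) (lam eta : ℝ)
    (ghat : Fin K → G) (Ahat : Finset (Fin K × Fin K))
    (hAhat : ∀ p ∈ Ahat, p.1 < p.2) :
    (∀ (g : Fin K → G) (A : Finset (Fin K × Fin K)), (∀ p ∈ A, p.1 < p.2) →
        (∑ k, s k (g k) + ∑ p ∈ A, (eta - lam * d (g p.1) (g p.2))) ≤
          (∑ k, s k (ghat k) + ∑ p ∈ Ahat, (eta - lam * d (ghat p.1) (ghat p.2)))) ↔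
      ((∀ g : Fin K → G,
          (∑ k, s k (g k) + ∑ p ∈ Finset.univ.filter (fun p : Fin K × Fin K => p.1 < p.2),
            max 0 (eta - lam * d (g p.1) (g p.2))) ≤
          (∑ k, s k (ghat k) + ∑ p ∈ Finset.univ.filter (fun p : Fin K × Fin K => p.1 < p.2),
            max 0 (eta - lam * d (ghat p.1) (ghat p.2)))) ∧
        (∀ k l : Fin K, k < l →
          (0 < eta - lam * d (ghat k) (ghat l) → (k, l) ∈ Ahat) ∧
          (eta - lam * d (ghat k) (ghat l) < 0 → (k, l) ∉ Ahat))) := by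
  set P := univ.filter (fun p : Fin K × Fin K => p.1 < p.2)
  set w : (Fin K → G) → Fin K × Fin K → ℝ := fun g p => eta - lam * d (g p.1) (g p.2)
  have subset_P {A : Finset (Fin K × Fin K)} (hA : ∀ p ∈ A, p.1 < p.2) : A ⊆ P :=
    fun p hp => mem_filter.mpr ⟨mem_univ p, hA p hp⟩
  rw [joint_max_iff_profile_max (fun A => ∀ p ∈ A, p.1 < p.2)
      (fun g A => ∑ k, s k (g k) + ∑ p ∈ A, w g p)
      (fun g => ∑ k, s k (g k) + ∑ p ∈ P, max 0 (w g p))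
      (fun g A hA => add_le_add_right (sum_le_sum_max_zero_of_subset _ (subset_P hA)) _)
      (fun g => ⟨P.filter (fun p => 0 < w g p),
        fun p hp => (mem_filter.mp (mem_filter.mp hp).1).2,
        congrArg _ (sum_filter_pos_eq_sum_max_zero _)⟩) ghat hAhat,
    add_right_inj, sum_eq_sum_max_zero_iff _ (subset_P hAhat)]
  simp only [P, w, mem_filter, mem_univ, true_and, Prod.forall]

/-- profiling out the network A: (ĝ, Â) maximizes F(g,A) over valid
networks iff ĝ maximizes V(g) = Σ_k s_k(g k) + Σ_{k<l} max(0, η − λ d(g k, g l)) and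
Â includes every pair with strictly positive gain and no pair with strictly negative gain. -/
theorem profiled_objective_equivalence {G : Type*} [Fintype G] [Nonempty G] [DecidableEq G]
    {K : ℕ} (s : Fin K → G → ℝ) (d : G → G → ℝ) (lam eta : ℝ)
    (ghat : Fin K → G) (Ahat : Finset (Fin K × Fin K))
    (hAhat : ∀ p ∈ Ahat, p.1 < p.2) :
    (∀ (g : Fin K → G) (A : Finset (Fin K × Fin K)), (∀ p ∈ A, p.1 < p.2) →
        (∑ k, s k (g k) + ∑ p ∈ A, (eta - lam * d (g p.1) (g p.2))) ≤
          (∑ k, s k (ghat k) + ∑ p ∈ Ahat, (eta - lam * d (ghat p.1) (ghat p.2)))) ↔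
      ((∀ g : Fin K → G,
          (∑ k, s k (g k) + ∑ p ∈ Finset.univ.filter (fun p : Fin K × Fin K => p.1 < p.2),
            max 0 (eta - lam * d (g p.1) (g p.2))) ≤
          (∑ k, s k (ghat k) + ∑ p ∈ Finset.univ.filter (fun p : Fin K × Fin K => p.1 < p.2),
            max 0 (eta - lam * d (ghat p.1) (ghat p.2)))) ∧
        (∀ k l : Fin K, k < l →
          (0 < eta - lam * d (ghat k) (ghat l) → (k, l) ∈ Ahat) ∧
          (eta - lam * d (ghat k) (ghat l) < 0 → (k, l) ∉ Ahat))) :=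
  profiled_objective_equivalence_general s d lam eta ghat Ahat hAhat
end
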